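/- arXiv:2110.11174 — 3 statements merged into one kernel-verified Lean document; each statement's English description precedes it below -/
import Mathlib

section
/- For every integer k ≥ 1, and all integers m, n with n ≥ |m| + k + 1 and |m| ≥ n/2 - 2k + 2, one has N_k(m,n) = p(n - |m| - k + 1) - p(n - |m| - k). -/
/-- `partitionCount n` is the number of partitions of `n`. -/
def partitionCount (n : ℕ) : ℕ := Fintype.card (Nat.Partition n)

/-- The partition function extended to the integers by `0` on negative arguments. -/
def pInt (x : ℤ) : ℤ := if 0 ≤ x then (partitionCount x.toNat : ℤ) else 0

/-- Garvan's `k`-rank counting function `N_k(m,n)`, obtained by expanding the generating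
function `(q;q)_∞⁻¹ ∑_{ℓ≥1} (-1)^{ℓ-1} q^{ℓ((2k-1)ℓ-1)/2+|m|ℓ}(1-q^ℓ)`:
`N_k(m,n) = ∑_{ℓ≥1} (-1)^{ℓ-1} (p(n - ((2k-1)ℓ²-ℓ)/2 - |m|ℓ) - p(n - ((2k-1)ℓ²-ℓ)/2 - (|m|+1)ℓ))`,
the sum being finite since `p` vanishes on negative arguments. -/
def Nk (k : ℕ) (m n : ℤ) : ℤ :=
  ∑ ℓ ∈ Finset.Icc 1 (n.toNat + 1),
    (-1 : ℤ) ^ (ℓ - 1) *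
      (pInt (n - ((2 * (k : ℤ) - 1) * (ℓ : ℤ) ^ 2 - ℓ) / 2 - |m| * ℓ) -
        pInt (n - ((2 * (k : ℤ) - 1) * (ℓ : ℤ) ^ 2 - ℓ) / 2 - (|m| + 1) * ℓ))

/-! In `N_k(m,n)` only the term `ℓ = 1` can involve a partition number of a nonnegative
argument: once `n ≤ 2|m| + 4k - 4`, the exponent `((2k-1)ℓ²-ℓ)/2 + |m|ℓ` of every term with
`ℓ ≥ 2` already exceeds `n`. -/

lemma pInt_of_neg {x : ℤ} (hx : x < 0) : pInt x = 0 := by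
  simp [pInt, not_le.mpr hx]

lemma two_mul_pentagonal_ediv_two (k ℓ : ℤ) :
    2 * (((2 * k - 1) * ℓ ^ 2 - ℓ) / 2) = (2 * k - 1) * ℓ ^ 2 - ℓ := by
  refine Int.two_mul_ediv_two_of_even ?_
  have hsplit : (2 * k - 1) * ℓ ^ 2 - ℓ = 2 * (k * ℓ ^ 2) - ℓ * (ℓ + 1) := by ring
  rw [hsplit]
  exact (even_two_mul _).sub (Int.even_mul_succ_self ℓ)

lemma lt_pentagonal_ediv_two_add_mul {k a n ℓ : ℤ} (hk : 1 ≤ k) (ha : 0 ≤ a) (hℓ : 2 ≤ ℓ)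
    (hn : n ≤ 2 * a + 4 * k - 4) :
    n < ((2 * k - 1) * ℓ ^ 2 - ℓ) / 2 + a * ℓ := by
  have hd := two_mul_pentagonal_ediv_two k ℓ
  -- `2 * (exponent - n) ≥ (ℓ - 2) * ((2k-1)(ℓ+2) - 1 + 2a) + 2`
  nlinarith [mul_nonneg ha (by linarith : (0 : ℤ) ≤ ℓ - 2),
    mul_nonneg (by linarith : (0 : ℤ) ≤ ℓ - 2)
      (by nlinarith : (0 : ℤ) ≤ (2 * k - 1) * (ℓ + 2) - 1)]

lemma Nk_eq_of_le_two_mul_abs_add {k : ℕ} (hk : 1 ≤ k) {m n : ℤ}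
    (hn : n ≤ 2 * |m| + 4 * k - 4) :
    Nk k m n = pInt (n - |m| - k + 1) - pInt (n - |m| - k) := by
  have hk' : (1 : ℤ) ≤ k := by exact_mod_cast hk
  rw [Nk, Finset.sum_eq_single_of_mem 1 (by simp)]
  · have hd : ((2 * (k : ℤ) - 1) * ((1 : ℕ) : ℤ) ^ 2 - ((1 : ℕ) : ℤ)) / 2 = k - 1 := by
      push_cast; omega
    rw [hd]
    ring_nf
  · intro ℓ hℓ _
    have hℓ2 : (2 : ℤ) ≤ ℓ := by
      simp only [Finset.mem_Icc] at hℓ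
      omega
    have hlt := lt_pentagonal_ediv_two_add_mul hk' (abs_nonneg m) hℓ2 hn
    rw [pInt_of_neg (by linarith), pInt_of_neg (by linarith), sub_zero, mul_zero]

theorem stmt9_general (k : ℕ) (hk : 1 ≤ k) (m n : ℤ)
    (h2 : (n : ℝ) / 2 - 2 * k + 2 ≤ |m|) :
    Nk k m n = pInt (n - |m| - k + 1) - pInt (n - |m| - k) := by
  refine Nk_eq_of_le_two_mul_abs_add hk ?_
  have hR : (n : ℝ) ≤ ((2 * |m| + 4 * k - 4 : ℤ) : ℝ) := by
    push_cast at h2 ⊢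
    linarith
  exact_mod_cast hR

theorem stmt9 (k : ℕ) (hk : 1 ≤ k) (m n : ℤ)
    (h1 : |m| + k + 1 ≤ n) (h2 : (n : ℝ) / 2 - 2 * k + 2 ≤ |m|) :
    Nk k m n = pInt (n - |m| - k + 1) - pInt (n - |m| - k) :=
  stmt9_general k hk m n h2
end

section
/- There is an absolute constant c > 0 such that p(ℓ+1) - p(ℓ) ≥ c · ℓ^{-1/2} p(ℓ) for all integers ℓ ≥ 1. -/
open Finset

namespace Stmt13Aux

/-- The finset of partitions of `n` with no part equal to `1`. -/
def QF (n : ℕ) : Finset (Nat.Partition n) :=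
  Finset.univ.filter (fun μ => 1 ∉ μ.parts)

/-- The number of partitions of `n` with no part equal to `1`. -/
def q (n : ℕ) : ℕ := (QF n).card

/-- The total number of parts equal to `k` among all partitions of `n` with no part `1`. -/
def S (k n : ℕ) : ℕ := ∑ μ ∈ QF n, μ.parts.count k

lemma mem_QF {n : ℕ} {μ : Nat.Partition n} : μ ∈ QF n ↔ 1 ∉ μ.parts := by
  simp [QF]

lemma parts_ne_zero {n : ℕ} (μ : Nat.Partition n) (hn : n ≠ 0) : μ.parts ≠ 0 := by
  intro h
  apply hn
  rw [← μ.parts_sum, h, Multiset.sum_zero]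

lemma sup_mem {s : Multiset ℕ} (h : s ≠ 0) : s.sup ∈ s := by
  induction s using Multiset.induction_on with
  | empty => exact absurd rfl h
  | cons a t ih =>
    rw [Multiset.sup_cons]
    rcases eq_or_ne t 0 with rfl | ht
    · simp
    · rcases le_total a t.sup with hle | hle
      · rw [sup_eq_right.2 hle]
        exact Multiset.mem_cons_of_mem (ih ht)
      · rw [sup_eq_left.2 hle]
        exact Multiset.mem_cons_self _ _

lemma q_zero : q 0 = 1 := by
  rw [q, QF]
  rw [Finset.filter_true_of_mem (fun μ _ => by simp)]
  simp

lemma q_one : q 1 = 0 := by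
  rw [q, Finset.card_eq_zero, Finset.eq_empty_iff_forall_notMem]
  intro μ hμ
  rw [mem_QF] at hμ
  apply hμ
  rw [Nat.Partition.partition_one_parts]
  simp

lemma q_pos {n : ℕ} (hn : 2 ≤ n) : 1 ≤ q n := by
  rw [q, Nat.one_le_iff_ne_zero, ← Nat.pos_iff_ne_zero, Finset.card_pos]
  refine ⟨Nat.Partition.indiscrete n, ?_⟩
  rw [mem_QF, Nat.Partition.indiscrete_parts (by omega)]
  simp
  omega

/-- the parts of the bumped partition: the largest part is increased by one -/
def bumpParts {n : ℕ} (μ : Nat.Partition n) : Multiset ℕ :=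
  (μ.parts.sup + 1) ::ₘ μ.parts.erase μ.parts.sup

lemma bumpParts_sup {n : ℕ} (μ : Nat.Partition n) : (bumpParts μ).sup = μ.parts.sup + 1 := by
  rw [bumpParts, Multiset.sup_cons]
  have h : (μ.parts.erase μ.parts.sup).sup ≤ μ.parts.sup :=
    Multiset.sup_le.2 fun b hb => Multiset.le_sup (Multiset.mem_of_mem_erase hb)
  exact sup_eq_left.2 (h.trans (Nat.le_succ _))

/-- bump a partition of `n` with no part `1` to such a partition of `n+1` -/
def bump {n : ℕ} (hn : n ≠ 0) (x : {μ : Nat.Partition n // 1 ∉ μ.parts}) :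
    {μ : Nat.Partition (n + 1) // 1 ∉ μ.parts} :=
  ⟨⟨bumpParts x.1,
    by
      intro i hi
      rcases Multiset.mem_cons.1 hi with rfl | hi
      · omega
      · exact x.1.parts_pos (Multiset.mem_of_mem_erase hi),
    by
      have hM : x.1.parts.sup ∈ x.1.parts := sup_mem (parts_ne_zero _ hn)
      have h2 : x.1.parts.sup + (x.1.parts.erase x.1.parts.sup).sum = n := by
        rw [← Multiset.sum_cons, Multiset.cons_erase hM, x.1.parts_sum]
      rw [bumpParts, Multiset.sum_cons]
      omega⟩,
    by
      intro h
      rcases Multiset.mem_cons.1 h with heq | hmem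
      · have hM : x.1.parts.sup ∈ x.1.parts := sup_mem (parts_ne_zero _ hn)
        have := x.1.parts_pos hM
        omega
      · exact x.2 (Multiset.mem_of_mem_erase hmem)⟩

lemma bump_injective {n : ℕ} (hn : n ≠ 0) :
    Function.Injective (bump (n := n) hn) := by
  intro x y h
  have hparts : bumpParts x.1 = bumpParts y.1 := congrArg (fun z => z.1.parts) h
  have hsup : x.1.parts.sup = y.1.parts.sup := by
    have := congrArg Multiset.sup hparts
    rw [bumpParts_sup, bumpParts_sup] at this
    omega
  rw [bumpParts, bumpParts, hsup] at hparts
  have herase := (Multiset.cons_inj_right _).1 hparts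
  have hMx : x.1.parts.sup ∈ x.1.parts := sup_mem (parts_ne_zero _ hn)
  have hMy : y.1.parts.sup ∈ y.1.parts := sup_mem (parts_ne_zero _ hn)
  apply Subtype.ext
  apply Nat.Partition.ext
  rw [← Multiset.cons_erase hMx, ← Multiset.cons_erase hMy, hsup, herase]

lemma q_step {n : ℕ} (hn : 2 ≤ n) : q n ≤ q (n + 1) := by
  have h1 : q n = Fintype.card {μ : Nat.Partition n // 1 ∉ μ.parts} :=
    (Fintype.card_subtype _).symm
  have h2 : q (n + 1) = Fintype.card {μ : Nat.Partition (n + 1) // 1 ∉ μ.parts} :=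
    (Fintype.card_subtype _).symm
  rw [h1, h2]
  exact Fintype.card_le_of_injective _ (bump_injective (by omega))

lemma q_le_of_le' {a : ℕ} (ha : 2 ≤ a) : ∀ {b : ℕ}, a ≤ b → q a ≤ q b := by
  intro b hab
  induction b, hab using Nat.le_induction with
  | base => exact le_refl _
  | succ n hn ih => exact ih.trans (q_step (ha.trans hn))

lemma q_mono {a b : ℕ} (hab : a ≤ b) (hb : 2 ≤ b) : q a ≤ q b := by
  rcases Nat.lt_or_ge a 2 with ha | ha
  · interval_cases a
    · rw [q_zero]; exact q_pos hb
    · rw [q_one]; exact Nat.zero_le _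
  · exact q_le_of_le' ha hab

/-- p(n+1) = p(n) + q(n+1) -/
lemma p_succ (n : ℕ) : partitionCount (n + 1) = partitionCount n + q (n + 1) := by
  classical
  have hsplit := Finset.card_filter_add_card_filter_not
    (s := (Finset.univ : Finset (Nat.Partition (n + 1)))) (p := fun μ => 1 ∈ μ.parts)
  have hq : (Finset.univ.filter (fun μ : Nat.Partition (n + 1) => ¬ 1 ∈ μ.parts)).card
      = q (n + 1) := rfl
  have hp : (Finset.univ.filter (fun μ : Nat.Partition (n + 1) => 1 ∈ μ.parts)).card
      = partitionCount n := by
    rw [partitionCount, ← Finset.card_univ]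
    refine Finset.card_bij'
      (fun μ hμ => ⟨μ.parts.erase 1,
        fun {i} hi => μ.parts_pos (Multiset.mem_of_mem_erase hi), ?_⟩)
      (fun ν _ => ⟨1 ::ₘ ν.parts, fun {i} hi => ?_, ?_⟩) (fun _ _ => Finset.mem_univ _)
      (fun ν hν => ?_) (fun μ hμ => ?_) (fun ν hν => ?_)
    · have h1 : 1 ∈ μ.parts := (Finset.mem_filter.1 hμ).2
      have h := Multiset.cons_erase h1
      have h2 : (1 ::ₘ μ.parts.erase 1).sum = n + 1 := by rw [h, μ.parts_sum]
      rw [Multiset.sum_cons] at h2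
      omega
    · rcases Multiset.mem_cons.1 hi with rfl | hi
      · omega
      · exact ν.parts_pos hi
    · rw [Multiset.sum_cons, ν.parts_sum]; omega
    · refine Finset.mem_filter.2 ⟨Finset.mem_univ _, ?_⟩
      exact Multiset.mem_cons_self _ _
    · have h1 : 1 ∈ μ.parts := (Finset.mem_filter.1 hμ).2
      exact Nat.Partition.ext (Multiset.cons_erase h1)
    · exact Nat.Partition.ext (Multiset.erase_cons_head _ _)
  rw [partitionCount, ← Finset.card_univ, ← hsplit, hp, hq]

lemma p_zero : partitionCount 0 = 1 := by
  rw [partitionCount, Fintype.card_unique]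

lemma p_eq_sum (n : ℕ) : partitionCount n = ∑ j ∈ Finset.range (n + 1), q j := by
  induction n with
  | zero =>
    rw [Finset.range_one, Finset.sum_singleton, p_zero, q_zero]
  | succ n ih =>
    rw [Finset.sum_range_succ, ← ih, p_succ]

/-- the key recurrence: S k (n+k) = S k n + q n, for k ≥ 2 -/
lemma S_rec {k : ℕ} (hk : 2 ≤ k) (n : ℕ) : S k (n + k) = S k n + q n := by
  classical
  rw [S, ← Finset.sum_filter_add_sum_filter_not (QF (n + k)) (fun μ => k ∈ μ.parts)]
  have h2 : ∑ μ ∈ (QF (n + k)).filter (fun μ => ¬ k ∈ μ.parts), μ.parts.count k = 0 := by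
    refine Finset.sum_eq_zero fun μ hμ => ?_
    exact Multiset.count_eq_zero.2 (Finset.mem_filter.1 hμ).2
  rw [h2, add_zero]
  have h1 : ∑ μ ∈ (QF (n + k)).filter (fun μ => k ∈ μ.parts), μ.parts.count k
      = ∑ ν ∈ QF n, (ν.parts.count k + 1) := by
    symm
    refine Finset.sum_bij'
      (fun ν hν => (⟨k ::ₘ ν.parts, fun {i} hi => ?_, ?_⟩ : Nat.Partition (n + k)))
      (fun μ hμ => (⟨μ.parts.erase k,
        fun {i} hi => μ.parts_pos (Multiset.mem_of_mem_erase hi), ?_⟩ : Nat.Partition n))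
      (fun ν hν => ?_) (fun μ hμ => ?_) (fun ν hν => ?_) (fun μ hμ => ?_) (fun ν hν => ?_)
    · rcases Multiset.mem_cons.1 hi with rfl | hi
      · omega
      · exact ν.parts_pos hi
    · rw [Multiset.sum_cons, ν.parts_sum]; omega
    · have hkμ : k ∈ μ.parts := (Finset.mem_filter.1 hμ).2
      have h := Multiset.cons_erase hkμ
      have h2 : (k ::ₘ μ.parts.erase k).sum = n + k := by rw [h, μ.parts_sum]
      rw [Multiset.sum_cons] at h2
      omega
    · refine Finset.mem_filter.2 ⟨?_, Multiset.mem_cons_self _ _⟩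
      rw [mem_QF]
      intro h
      rcases Multiset.mem_cons.1 h with heq | hmem
      · omega
      · exact (mem_QF.1 hν) hmem
    · rw [mem_QF]
      intro h
      exact (mem_QF.1 (Finset.mem_filter.1 hμ).1) (Multiset.mem_of_mem_erase h)
    · exact Nat.Partition.ext (Multiset.erase_cons_head _ _)
    · have hkμ : k ∈ μ.parts := (Finset.mem_filter.1 hμ).2
      exact Nat.Partition.ext (Multiset.cons_erase hkμ)
    · simp [Multiset.count_cons_self]
  rw [h1, Finset.sum_add_distrib, Finset.sum_const, S, q, smul_eq_mul, mul_one]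

/-- main inequality by strong induction -/
lemma main_ineq {k : ℕ} (hk : 2 ≤ k) : ∀ m : ℕ,
    partitionCount m ≤ k * (S k (m + 1) + q (m + 1)) + 1 := by
  intro m
  induction m using Nat.strong_induction_on with
  | _ m ih =>
    rcases Nat.eq_zero_or_pos m with rfl | hm
    · rw [p_zero]; omega
    have hm2 : 2 ≤ m + 1 := by omega
    rcases Nat.lt_or_ge m k with hmk | hmk
    · have h1 : partitionCount m ≤ (m + 1) * q (m + 1) := by
        rw [p_eq_sum]
        calc ∑ j ∈ Finset.range (m + 1), q j
            ≤ ∑ _j ∈ Finset.range (m + 1), q (m + 1) :=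
              Finset.sum_le_sum fun j hj => q_mono (by
                have := Finset.mem_range.1 hj; omega) hm2
          _ = (m + 1) * q (m + 1) := by rw [Finset.sum_const, Finset.card_range, smul_eq_mul]
      have h2 : (m + 1) * q (m + 1) ≤ k * q (m + 1) := Nat.mul_le_mul_right _ (by omega)
      have h3 : k * q (m + 1) ≤ k * (S k (m + 1) + q (m + 1)) :=
        Nat.mul_le_mul_left _ (by omega)
      omega
    · set m' := m - k with hm'
      have hmm : m' + k = m := Nat.sub_add_cancel hmk
      have hlt : m' < m := by omega
      have hsplit : partitionCount m = partitionCount m'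
          + ∑ j ∈ Finset.Ico (m' + 1) (m + 1), q j := by
        rw [p_eq_sum, p_eq_sum, Finset.range_eq_Ico, Finset.range_eq_Ico]
        exact (Finset.sum_Ico_consecutive q (by omega : 0 ≤ m' + 1)
          (by omega : m' + 1 ≤ m + 1)).symm
      have hIco : ∑ j ∈ Finset.Ico (m' + 1) (m + 1), q j ≤ k * q (m + 1) := by
        calc ∑ j ∈ Finset.Ico (m' + 1) (m + 1), q j
            ≤ ∑ _j ∈ Finset.Ico (m' + 1) (m + 1), q (m + 1) :=
              Finset.sum_le_sum fun j hj => q_mono (by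
                have := (Finset.mem_Ico.1 hj).2; omega) hm2
          _ = k * q (m + 1) := by
              rw [Finset.sum_const, Nat.card_Ico, smul_eq_mul]
              congr 1
              omega
      have hrec : S k (m + 1) = S k (m' + 1) + q (m' + 1) := by
        have : (m' + 1) + k = m + 1 := by omega
        rw [← this, S_rec hk]
      have hih := ih m' hlt
      calc partitionCount m
          = partitionCount m' + ∑ j ∈ Finset.Ico (m' + 1) (m + 1), q j := hsplit
        _ ≤ (k * (S k (m' + 1) + q (m' + 1)) + 1) + k * q (m + 1) := by omega
        _ = k * (S k (m' + 1) + q (m' + 1) + q (m + 1)) + 1 := by ring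
        _ = k * (S k (m + 1) + q (m + 1)) + 1 := by rw [hrec]

lemma sum_count_mul_le (s : Multiset ℕ) (I : Finset ℕ) :
    ∑ k ∈ I, k * s.count k ≤ s.sum := by
  classical
  have hs : s.sum = ∑ a ∈ s.toFinset, s.count a * a := by
    have h := Finset.sum_multiset_map_count s (id : ℕ → ℕ)
    simpa using h
  calc ∑ k ∈ I, k * s.count k
      = ∑ k ∈ I.filter (fun k => k ∈ s.toFinset), k * s.count k := by
        symm
        apply Finset.sum_filter_of_ne
        intro k _ hne
        rw [Multiset.mem_toFinset]
        by_contra h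
        rw [Multiset.count_eq_zero.2 h, mul_zero] at hne
        exact hne rfl
    _ ≤ ∑ k ∈ s.toFinset, k * s.count k :=
        Finset.sum_le_sum_of_subset (fun x hx => (Finset.mem_filter.1 hx).2)
    _ = s.sum := by
        rw [hs]
        exact Finset.sum_congr rfl fun a _ => mul_comm _ _

/-- pigeonhole: there is a good part size k -/
lemma exists_good_k {ℓ : ℕ} (hℓ : 1 ≤ ℓ) :
    ∃ k : ℕ, 2 ≤ k ∧ k ≤ 2 * (Nat.sqrt ℓ + 1) ∧ S k (ℓ + 1) ≤ q (ℓ + 1) := by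
  classical
  set K := Nat.sqrt ℓ + 1 with hK
  have hK1 : 1 ≤ K := by omega
  set I := Finset.Icc (K + 1) (2 * K) with hI
  have hcard : I.card = K := by rw [hI, Nat.card_Icc]; omega
  have hper : ∀ μ ∈ QF (ℓ + 1), ∑ k ∈ I, μ.parts.count k ≤ K := by
    intro μ _
    have h1 : (K + 1) * ∑ k ∈ I, μ.parts.count k ≤ ∑ k ∈ I, k * μ.parts.count k := by
      rw [Finset.mul_sum]
      refine Finset.sum_le_sum fun k hk => ?_
      have hk1 : K + 1 ≤ k := (Finset.mem_Icc.1 hk).1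
      exact Nat.mul_le_mul_right _ hk1
    have h2 : ∑ k ∈ I, k * μ.parts.count k ≤ ℓ + 1 := by
      have := sum_count_mul_le μ.parts I
      rwa [μ.parts_sum] at this
    have h3 : ℓ + 1 ≤ K * K := by
      have := Nat.lt_succ_sqrt ℓ
      simpa [hK, Nat.succ_eq_add_one] using this
    have h4 : (K + 1) * ∑ k ∈ I, μ.parts.count k ≤ (K + 1) * K := by
      calc (K + 1) * ∑ k ∈ I, μ.parts.count k ≤ ℓ + 1 := h1.trans h2
        _ ≤ K * K := h3
        _ ≤ (K + 1) * K := Nat.mul_le_mul_right _ (by omega)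
    exact Nat.le_of_mul_le_mul_left h4 (by omega)
  have htot : ∑ k ∈ I, S k (ℓ + 1) ≤ K * q (ℓ + 1) := by
    calc ∑ k ∈ I, S k (ℓ + 1) = ∑ μ ∈ QF (ℓ + 1), ∑ k ∈ I, μ.parts.count k := by
          simp only [S]
          rw [Finset.sum_comm]
      _ ≤ ∑ _μ ∈ QF (ℓ + 1), K := Finset.sum_le_sum hper
      _ = q (ℓ + 1) * K := by rw [Finset.sum_const, smul_eq_mul, q]
      _ = K * q (ℓ + 1) := mul_comm _ _
  by_contra hcon
  push_neg at hcon
  have hall : ∀ k ∈ I, q (ℓ + 1) + 1 ≤ S k (ℓ + 1) := by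
    intro k hk
    have hk2 : 2 ≤ k := by
      have := (Finset.mem_Icc.1 hk).1; omega
    have hk3 : k ≤ 2 * K := (Finset.mem_Icc.1 hk).2
    have := hcon k hk2 hk3
    omega
  have hlow : K * (q (ℓ + 1) + 1) ≤ ∑ k ∈ I, S k (ℓ + 1) := by
    calc K * (q (ℓ + 1) + 1) = ∑ _k ∈ I, (q (ℓ + 1) + 1) := by
          rw [Finset.sum_const, hcard, smul_eq_mul]
      _ ≤ ∑ k ∈ I, S k (ℓ + 1) := Finset.sum_le_sum hall
  have hcontr : K * (q (ℓ + 1) + 1) ≤ K * q (ℓ + 1) := hlow.trans htot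
  have := Nat.le_of_mul_le_mul_left hcontr (by omega : 0 < K)
  omega

/-- the master nat inequality -/
lemma nat_ineq {ℓ : ℕ} (hℓ : 1 ≤ ℓ) :
    partitionCount ℓ ≤ 10 * Nat.sqrt ℓ * q (ℓ + 1) := by
  obtain ⟨k, hk2, hkK, hkS⟩ := exists_good_k hℓ
  set K := Nat.sqrt ℓ + 1 with hK
  have h1 := main_ineq hk2 ℓ
  have hq1 : 1 ≤ q (ℓ + 1) := q_pos (by omega)
  have hsqrt1 : 1 ≤ Nat.sqrt ℓ := by
    rw [Nat.one_le_iff_ne_zero]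
    intro h
    have := Nat.sqrt_eq_zero.1 h
    omega
  have h2 : k * (S k (ℓ + 1) + q (ℓ + 1)) + 1 ≤ 2 * K * (2 * q (ℓ + 1)) + q (ℓ + 1) := by
    have hSq : S k (ℓ + 1) + q (ℓ + 1) ≤ 2 * q (ℓ + 1) := by omega
    have hmul : k * (S k (ℓ + 1) + q (ℓ + 1)) ≤ 2 * K * (2 * q (ℓ + 1)) :=
      Nat.mul_le_mul hkK hSq
    omega
  have h3 : 2 * K * (2 * q (ℓ + 1)) + q (ℓ + 1) ≤ 10 * Nat.sqrt ℓ * q (ℓ + 1) := by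
    have hKs : K ≤ 2 * Nat.sqrt ℓ := by omega
    calc 2 * K * (2 * q (ℓ + 1)) + q (ℓ + 1)
        = 4 * K * q (ℓ + 1) + q (ℓ + 1) := by ring
      _ ≤ 4 * (2 * Nat.sqrt ℓ) * q (ℓ + 1) + 1 * q (ℓ + 1) := by
          have := Nat.mul_le_mul_right (q (ℓ + 1)) (Nat.mul_le_mul_left 4 hKs)
          omega
      _ ≤ 10 * Nat.sqrt ℓ * q (ℓ + 1) := by
          have h8 : 4 * (2 * Nat.sqrt ℓ) = 8 * Nat.sqrt ℓ := by ring
          rw [h8]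
          have hq2 : 1 * q (ℓ + 1) ≤ 2 * Nat.sqrt ℓ * q (ℓ + 1) :=
            Nat.mul_le_mul_right _ (by omega)
          calc 8 * Nat.sqrt ℓ * q (ℓ + 1) + 1 * q (ℓ + 1)
              ≤ 8 * Nat.sqrt ℓ * q (ℓ + 1) + 2 * Nat.sqrt ℓ * q (ℓ + 1) := by omega
            _ = 10 * Nat.sqrt ℓ * q (ℓ + 1) := by ring
  omega

end Stmt13Aux

open Stmt13Aux in
theorem stmt13 :
    ∃ c > 0, ∀ ℓ : ℕ, 1 ≤ ℓ →
      c * (ℓ : ℝ) ^ (-(1 : ℝ) / 2) * (partitionCount ℓ : ℝ) ≤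
        (partitionCount (ℓ + 1) : ℝ) - (partitionCount ℓ : ℝ) := by
  refine ⟨1 / 10, by norm_num, fun ℓ hℓ => ?_⟩
  have hd : (partitionCount (ℓ + 1) : ℝ) - (partitionCount ℓ : ℝ) = (q (ℓ + 1) : ℝ) := by
    rw [p_succ ℓ]
    push_cast
    ring
  have hℓR : (0 : ℝ) < (ℓ : ℝ) := by exact_mod_cast hℓ
  have hsq_pos : (0 : ℝ) < Real.sqrt ℓ := Real.sqrt_pos.2 hℓR
  have hns : (Nat.sqrt ℓ : ℝ) ≤ Real.sqrt ℓ := by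
    rw [show ((Nat.sqrt ℓ : ℝ)) = Real.sqrt ((Nat.sqrt ℓ : ℝ) ^ 2) from
      (Real.sqrt_sq (by positivity)).symm]
    apply Real.sqrt_le_sqrt
    have h := Nat.sqrt_le ℓ
    push_cast [pow_two]
    exact_mod_cast h
  have hmain : (partitionCount ℓ : ℝ) ≤ 10 * Real.sqrt ℓ * (q (ℓ + 1) : ℝ) := by
    have h1 : (partitionCount ℓ : ℝ) ≤ ((10 * Nat.sqrt ℓ * q (ℓ + 1) : ℕ) : ℝ) :=
      Nat.cast_le.2 (nat_ineq hℓ)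
    have h2 : ((10 * Nat.sqrt ℓ * q (ℓ + 1) : ℕ) : ℝ)
        ≤ 10 * Real.sqrt ℓ * (q (ℓ + 1) : ℝ) := by
      push_cast
      have hq0 : (0 : ℝ) ≤ (q (ℓ + 1) : ℝ) := Nat.cast_nonneg _
      nlinarith
    exact h1.trans h2
  have hexp : (ℓ : ℝ) ^ (-(1 : ℝ) / 2) = (Real.sqrt ℓ)⁻¹ := by
    rw [show (-(1 : ℝ) / 2) = -(1 / 2) by norm_num,
      Real.rpow_neg (le_of_lt hℓR), ← Real.sqrt_eq_rpow]
  rw [hd, hexp]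
  calc (1 / 10 : ℝ) * (Real.sqrt ℓ)⁻¹ * (partitionCount ℓ : ℝ)
      ≤ (1 / 10 : ℝ) * (Real.sqrt ℓ)⁻¹ * (10 * Real.sqrt ℓ * (q (ℓ + 1) : ℝ)) := by
        gcongr
    _ = (q (ℓ + 1) : ℝ) := by field_simp
end

section
/- For z = x + iy with x > 0, real b ≥ 0, and integer ℓ ≥ 0, the series ∑_{n≥1} (-1)^{n-1} n^ℓ e^{-n²z - bnz} converges absolutely and satisfies |∑_{n≥1}(-1)^{n-1} n^ℓ e^{-n²z - bnz}| ≤ C_ℓ e^{-bx} x^{-(ℓ+1)/2} for some constant C_ℓ depending only on ℓ. -/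
open Real

lemma pow_le_factorial_mul_exp (ℓ : ℕ) {u : ℝ} (hu : 0 ≤ u) :
    u ^ ℓ ≤ (ℓ.factorial : ℝ) * Real.exp u := by
  have h := Real.sum_le_exp_of_nonneg hu (ℓ + 1)
  have h2 : u ^ ℓ / (ℓ.factorial : ℝ) ≤ Real.exp u := by
    refine le_trans ?_ h
    exact Finset.single_le_sum (f := fun i => u ^ i / (i.factorial : ℝ))
      (fun i _ => by positivity) (Finset.self_mem_range_succ ℓ)
  have hfac : (0:ℝ) < ℓ.factorial := by exact_mod_cast ℓ.factorial_pos
  rw [div_le_iff₀ hfac] at h2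
  linarith [h2]

lemma term_bound (ℓ : ℕ) {x : ℝ} (hx : 0 < x) {m : ℝ} (hm : 1 ≤ m) :
    m ^ ℓ * Real.exp (-(m ^ 2) * x) ≤
      (ℓ.factorial : ℝ) * Real.exp 1 * x ^ (-(ℓ:ℝ)/2) * Real.exp (-(m * Real.sqrt x) / 2) := by
  have hs : 0 < Real.sqrt x := Real.sqrt_pos.mpr hx
  set u := m * Real.sqrt x with hudef
  have hu : 0 < u := by positivity
  have hm' : m = u / Real.sqrt x := by field_simp; exact hudef.symm
  have hx2 : Real.sqrt x ^ 2 = x := Real.sq_sqrt hx.le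
  have hmsq : u ^ 2 = m ^ 2 * x := by rw [hudef, mul_pow, hx2]
  have hpow : m ^ ℓ = u ^ ℓ * x ^ (-(ℓ:ℝ)/2) := by
    rw [hm', div_pow]
    rw [div_eq_mul_inv]
    congr 1
    rw [← Real.rpow_natCast (Real.sqrt x) ℓ, Real.sqrt_eq_rpow, ← Real.rpow_mul hx.le,
      ← Real.rpow_neg hx.le]
    ring_nf
  have key : u ^ ℓ * Real.exp (-(u ^ 2)) ≤ (ℓ.factorial : ℝ) * Real.exp 1 * Real.exp (-u / 2) := by
    have h1 : u ^ ℓ ≤ (ℓ.factorial : ℝ) * Real.exp u := pow_le_factorial_mul_exp ℓ hu.le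
    calc u ^ ℓ * Real.exp (-(u ^ 2)) ≤ (ℓ.factorial : ℝ) * Real.exp u * Real.exp (-(u ^ 2)) := by
          apply mul_le_mul_of_nonneg_right h1 (Real.exp_pos _).le
      _ = (ℓ.factorial : ℝ) * Real.exp (u - u ^ 2) := by rw [mul_assoc, ← Real.exp_add]; ring_nf
      _ ≤ (ℓ.factorial : ℝ) * Real.exp (1 + -u / 2) := by
          apply mul_le_mul_of_nonneg_left
            (Real.exp_le_exp.mpr (by nlinarith [sq_nonneg (u - 3/4)])) (by positivity)
      _ = (ℓ.factorial : ℝ) * Real.exp 1 * Real.exp (-u / 2) := by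
          rw [Real.exp_add, mul_assoc]
  calc m ^ ℓ * Real.exp (-(m ^ 2) * x)
      = u ^ ℓ * Real.exp (-(u ^ 2)) * x ^ (-(ℓ:ℝ)/2) := by
        rw [hpow]; rw [show -(u^2) = -(m^2*x) by rw[hmsq]]
        rw [show -(m^2) * x = -(m^2*x) by ring]; ring
    _ ≤ (ℓ.factorial : ℝ) * Real.exp 1 * Real.exp (-u / 2) * x ^ (-(ℓ:ℝ)/2) := by
        apply mul_le_mul_of_nonneg_right key (Real.rpow_nonneg hx.le _)
    _ = (ℓ.factorial : ℝ) * Real.exp 1 * x ^ (-(ℓ:ℝ)/2) * Real.exp (-u / 2) := by ring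

theorem stmt17 (ℓ : ℕ) :
    ∃ C > 0, ∀ z : ℂ, 0 < z.re → ∀ b : ℝ, 0 ≤ b →
      Summable (fun n : ℕ =>
        ‖(-1 : ℂ) ^ n * ((n : ℂ) + 1) ^ ℓ *
          Complex.exp (-((n : ℂ) + 1) ^ 2 * z - (b : ℂ) * ((n : ℂ) + 1) * z)‖) ∧
      ‖∑' n : ℕ, (-1 : ℂ) ^ n * ((n : ℂ) + 1) ^ ℓ *
          Complex.exp (-((n : ℂ) + 1) ^ 2 * z - (b : ℂ) * ((n : ℂ) + 1) * z)‖ ≤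
        C * Real.exp (-b * z.re) * z.re ^ (-((ℓ : ℝ) + 1) / 2) := by
  set A : ℝ := (ℓ.factorial : ℝ) * Real.exp 1 with hA
  have hApos : 0 < A := by positivity
  refine ⟨2 * A, by positivity, ?_⟩
  intro z hx b hb
  set x := z.re with hxdef
  set s := Real.sqrt x with hsdef
  have hs : 0 < s := Real.sqrt_pos.mpr hx
  set r : ℝ := Real.exp (-s / 2) with hrdef
  have hr0 : 0 < r := Real.exp_pos _
  have hr1 : r < 1 := Real.exp_lt_one_iff.mpr (by linarith)
  -- norm of each term
  have hnorm : ∀ n : ℕ, ‖(-1 : ℂ) ^ n * ((n : ℂ) + 1) ^ ℓ *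
      Complex.exp (-((n : ℂ) + 1) ^ 2 * z - (b : ℂ) * ((n : ℂ) + 1) * z)‖ =
      ((n : ℝ) + 1) ^ ℓ * Real.exp ((-((n:ℝ)+1)^2 - b*((n:ℝ)+1)) * x) := by
    intro n
    have h1 : (-((n : ℂ) + 1) ^ 2 * z - (b : ℂ) * ((n : ℂ) + 1) * z) =
        (((-((n:ℝ)+1)^2 - b*((n:ℝ)+1)) : ℝ) : ℂ) * z := by push_cast; ring
    rw [norm_mul, norm_mul, norm_pow, norm_pow, h1]
    rw [show ((n:ℂ)+1) = (((n:ℝ)+1 : ℝ) : ℂ) by push_cast; ring]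
    simp only [Real.norm_eq_abs, Complex.norm_exp, norm_neg, norm_one, one_pow,
      Complex.norm_real, Complex.re_ofReal_mul]
    rw [abs_of_nonneg (show (0:ℝ) ≤ (n:ℝ)+1 by positivity)]
    ring_nf
    rfl
  -- geometric majorant
  have hbound : ∀ n : ℕ, ((n : ℝ) + 1) ^ ℓ * Real.exp ((-((n:ℝ)+1)^2 - b*((n:ℝ)+1)) * x) ≤
      A * Real.exp (-b * x) * x ^ (-(ℓ:ℝ)/2) * r ^ (n+1) := by
    intro n
    set m : ℝ := (n : ℝ) + 1 with hmdef
    have hm : 1 ≤ m := by rw [hmdef]; have := Nat.cast_nonneg (α := ℝ) n; linarith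
    have hsplit : Real.exp ((-m^2 - b*m) * x) =
        Real.exp (-(m^2) * x) * Real.exp (-(b*m) * x) := by
      rw [← Real.exp_add]; ring_nf
    have hexp2 : Real.exp (-(b*m) * x) ≤ Real.exp (-b * x) := by
      apply Real.exp_le_exp.mpr; nlinarith [mul_nonneg (mul_nonneg hb (sub_nonneg.mpr hm)) hx.le]
    have hrp : Real.exp (-(m * s) / 2) = r ^ (n+1) := by
      rw [hrdef, ← Real.exp_nat_mul]
      congr 1
      push_cast [hmdef]; ring
    calc m ^ ℓ * Real.exp ((-m^2 - b*m) * x)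
        = m ^ ℓ * Real.exp (-(m^2) * x) * Real.exp (-(b*m) * x) := by rw [hsplit]; ring
      _ ≤ (A * x ^ (-(ℓ:ℝ)/2) * Real.exp (-(m * s) / 2)) * Real.exp (-b * x) := by
          apply mul_le_mul (term_bound ℓ hx hm) hexp2 (Real.exp_pos _).le (by positivity)
      _ = A * Real.exp (-b * x) * x ^ (-(ℓ:ℝ)/2) * r ^ (n+1) := by rw [hrp]; ring
  have hgsum : Summable (fun n : ℕ => A * Real.exp (-b * x) * x ^ (-(ℓ:ℝ)/2) * r ^ (n+1)) := by
    apply Summable.mul_left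
    exact (summable_geometric_of_lt_one hr0.le hr1).comp_injective Nat.succ_injective
  have hsum : Summable (fun n : ℕ =>
      ‖(-1 : ℂ) ^ n * ((n : ℂ) + 1) ^ ℓ *
        Complex.exp (-((n : ℂ) + 1) ^ 2 * z - (b : ℂ) * ((n : ℂ) + 1) * z)‖) := by
    apply Summable.of_nonneg_of_le (fun n => norm_nonneg _) (fun n => ?_) hgsum
    rw [hnorm n]; exact hbound n
  refine ⟨hsum, ?_⟩
  have hgeo : ∑' n : ℕ, r ^ (n+1) = r / (1 - r) := by
    have : ∑' n : ℕ, r ^ (n+1) = ∑' n : ℕ, r * r ^ n := by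
      congr 1; funext n; ring
    rw [this, tsum_mul_left, tsum_geometric_of_lt_one hr0.le hr1, div_eq_mul_inv]
  have hgeole : r / (1 - r) ≤ 2 * x ^ (-(1:ℝ)/2) := by
    have h1 : 1 - r > 0 := by linarith
    have hrr : r * Real.exp (s/2) = 1 := by rw [hrdef, ← Real.exp_add, show -s/2 + s/2 = 0 by ring, Real.exp_zero]
    have h2 : r / (1 - r) = 1 / (Real.exp (s/2) - 1) := by
      rw [div_eq_div_iff h1.ne' (show Real.exp (s/2) - 1 ≠ 0 by nlinarith [Real.add_one_le_exp (s/2)])]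
      linear_combination hrr
    have h3 : s/2 ≤ Real.exp (s/2) - 1 := by nlinarith [Real.add_one_le_exp (s/2)]
    have h4 : 1 / (Real.exp (s/2) - 1) ≤ 1 / (s/2) := by
      apply one_div_le_one_div_of_le (by linarith) h3
    have h5 : x ^ (-(1:ℝ)/2) = 1 / s := by
      rw [hsdef, Real.sqrt_eq_rpow, one_div, ← Real.rpow_neg hx.le]
      norm_num
    rw [h2, h5]
    calc 1 / (Real.exp (s/2) - 1) ≤ 1 / (s/2) := h4
      _ = 2 * (1/s) := by field_simp
  calc ‖∑' n : ℕ, (-1 : ℂ) ^ n * ((n : ℂ) + 1) ^ ℓ *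
          Complex.exp (-((n : ℂ) + 1) ^ 2 * z - (b : ℂ) * ((n : ℂ) + 1) * z)‖
      ≤ ∑' n : ℕ, ‖(-1 : ℂ) ^ n * ((n : ℂ) + 1) ^ ℓ *
          Complex.exp (-((n : ℂ) + 1) ^ 2 * z - (b : ℂ) * ((n : ℂ) + 1) * z)‖ :=
        norm_tsum_le_tsum_norm hsum
    _ ≤ ∑' n : ℕ, A * Real.exp (-b * x) * x ^ (-(ℓ:ℝ)/2) * r ^ (n+1) := by
        apply Summable.tsum_le_tsum (fun n => by rw [hnorm n]; exact hbound n) hsum hgsum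
    _ = A * Real.exp (-b * x) * x ^ (-(ℓ:ℝ)/2) * (r / (1 - r)) := by
        rw [tsum_mul_left, hgeo]
    _ ≤ A * Real.exp (-b * x) * x ^ (-(ℓ:ℝ)/2) * (2 * x ^ (-(1:ℝ)/2)) := by
        apply mul_le_mul_of_nonneg_left hgeole (by positivity)
    _ = 2 * A * Real.exp (-b * x) * (x ^ (-(ℓ:ℝ)/2) * x ^ (-(1:ℝ)/2)) := by ring
    _ = 2 * A * Real.exp (-b * x) * x ^ (-((ℓ:ℝ)+1)/2) := by
        rw [← Real.rpow_add hx, show -(ℓ:ℝ)/2 + -(1:ℝ)/2 = -((ℓ:ℝ)+1)/2 by ring]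
end
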